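/- Let θ be the logarithmic mean with partial derivatives θ₁, θ₂. For all s, t > 0: θ₁(s,t) + θ₂(s,t) ≥ θ(1,s) + θ(1,t) − θ(s,t). -/

import Mathlib

/-!
Both sides are controlled through the representation `θ(s,t) = ∫₀¹ s^u t^(1-u) du`. The weighted
AM–GM inequality says that `(x, y) ↦ x^u y^(1-u)` lies below each of its tangent planes; integrating
in `u`, `θ` is superadditive and lies below its tangent planes as well. Hence
`θ(1,s) + θ(1,t) ≤ θ(s+1,t+1) ≤ θ(s,t) + θ₁(s,t) + θ₂(s,t)`.
-/

/-- The logarithmic mean, extended by `θ(s,s) = s` and `θ(s,0) = θ(0,t) = 0`. -/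
noncomputable def logMean (s t : ℝ) : ℝ :=
  if s = t then s else if s = 0 ∨ t = 0 then 0 else (s - t) / (Real.log s - Real.log t)

/-- Partial derivative of the logarithmic mean in the first variable. -/
noncomputable def logMean₁ (s t : ℝ) : ℝ := deriv (fun x => logMean x t) s

/-- Partial derivative of the logarithmic mean in the second variable. -/
noncomputable def logMean₂ (s t : ℝ) : ℝ := deriv (fun y => logMean s y) t

open Real Set MeasureTheory
open scoped Interval

theorem hasDerivAt_intervalIntegral_of_continuousOn {F F' : ℝ → ℝ → ℝ} {K : Set ℝ} {x₀ a b : ℝ}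
    (hK : K ∈ nhds x₀) (hKc : IsCompact K) (hF : ∀ x ∈ K, ContinuousOn (F x) [[a, b]])
    (hF' : ContinuousOn (Function.uncurry F') (K ×ˢ [[a, b]]))
    (hderiv : ∀ x ∈ K, ∀ u ∈ [[a, b]], HasDerivAt (F · u) (F' x u) x) :
    HasDerivAt (fun x => ∫ u in a..b, F x u) (∫ u in a..b, F' x₀ u) x₀ := by
  have hx₀ : x₀ ∈ K := mem_of_mem_nhds hK
  obtain ⟨C, hC⟩ := (hKc.prod isCompact_uIcc).exists_bound_of_continuousOn hF'
  refine (intervalIntegral.hasDerivAt_integral_of_dominated_loc_of_deriv_le (bound := fun _ => C)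
    hK ?_ (hF x₀ hx₀).intervalIntegrable ?_ ?_ intervalIntegrable_const ?_).2
  · filter_upwards [hK] with x hx
    exact ((hF x hx).mono uIoc_subset_uIcc).aestronglyMeasurable measurableSet_uIoc
  · have : ContinuousOn (F' x₀) [[a, b]] :=
      hF'.comp (continuousOn_const.prodMk continuousOn_id) fun u hu => ⟨hx₀, hu⟩
    exact (this.mono uIoc_subset_uIcc).aestronglyMeasurable measurableSet_uIoc
  · exact ae_of_all _ fun u hu x hx => hC (x, u) ⟨hx, uIoc_subset_uIcc hu⟩
  · exact ae_of_all _ fun u hu x hx => hderiv x hx u (uIoc_subset_uIcc hu)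

theorem rpow_mul_rpow_le_tangent {p q x y u : ℝ} (hp : 0 < p) (hq : 0 < q) (hx : 0 ≤ x)
    (hy : 0 ≤ y) (hu₀ : 0 ≤ u) (hu₁ : u ≤ 1) :
    x ^ u * y ^ (1 - u) ≤ p ^ u * q ^ (1 - u) * (u * (x / p) + (1 - u) * (y / q)) :=
  calc x ^ u * y ^ (1 - u) = p ^ u * q ^ (1 - u) * ((x / p) ^ u * (y / q) ^ (1 - u)) := by
        rw [div_rpow hx hp.le, div_rpow hy hq.le]
        field_simp
    _ ≤ _ := by
        gcongr
        exact geom_mean_le_arith_mean2_weighted hu₀ (sub_nonneg.2 hu₁) (by positivity)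
          (by positivity) (add_sub_cancel u 1)

theorem rpow_mul_rpow_add_le {a b c d u : ℝ} (ha : 0 ≤ a) (hb : 0 ≤ b) (hc : 0 ≤ c) (hd : 0 ≤ d)
    (hac : 0 < a + c) (hbd : 0 < b + d) (hu₀ : 0 ≤ u) (hu₁ : u ≤ 1) :
    a ^ u * b ^ (1 - u) + c ^ u * d ^ (1 - u) ≤ (a + c) ^ u * (b + d) ^ (1 - u) :=
  calc _ ≤ (a + c) ^ u * (b + d) ^ (1 - u) * (u * (a / (a + c)) + (1 - u) * (b / (b + d))) +
        (a + c) ^ u * (b + d) ^ (1 - u) * (u * (c / (a + c)) + (1 - u) * (d / (b + d))) :=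
        add_le_add (rpow_mul_rpow_le_tangent hac hbd ha hb hu₀ hu₁)
          (rpow_mul_rpow_le_tangent hac hbd hc hd hu₀ hu₁)
    _ = (a + c) ^ u * (b + d) ^ (1 - u) := by
        field_simp
        ring

theorem continuous_rpow_mul_rpow_one_sub {s t : ℝ} (hs : 0 < s) (ht : 0 < t) :
    Continuous fun u : ℝ => s ^ u * t ^ (1 - u) := by
  fun_prop (disch := positivity)

theorem hasDerivAt_rpow_mul_rpow_one_sub {s t : ℝ} (hs : 0 < s) (ht : 0 < t) (u : ℝ) :
    HasDerivAt (fun u : ℝ => s ^ u * t ^ (1 - u)) ((log s - log t) * (s ^ u * t ^ (1 - u))) u :=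
  (((hasDerivAt_id' u).const_rpow hs).fun_mul
    (((hasDerivAt_id' u).const_sub 1).const_rpow ht)).congr_deriv (by ring)

theorem logMean_comm (s t : ℝ) : logMean s t = logMean t s := by
  unfold logMean
  split_ifs <;> simp_all [eq_comm, or_comm]
  rw [← neg_div_neg_eq, neg_sub, neg_sub]

theorem logMean_eq_integral {s t : ℝ} (hs : 0 < s) (ht : 0 < t) :
    logMean s t = ∫ u in (0 : ℝ)..1, s ^ u * t ^ (1 - u) := by
  rcases eq_or_ne s t with rfl | hst
  · simp [logMean, ← rpow_add hs]
  have hL : log s - log t ≠ 0 := sub_ne_zero.2 fun h => hst (log_injOn_pos hs ht h)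
  have hFTC := intervalIntegral.integral_eq_sub_of_hasDerivAt
    (fun u _ => hasDerivAt_rpow_mul_rpow_one_sub hs ht u)
    (((continuous_rpow_mul_rpow_one_sub hs ht).intervalIntegrable 0 1).const_mul _)
  rw [intervalIntegral.integral_const_mul] at hFTC
  rw [logMean, if_neg hst, if_neg (by simp [hs.ne', ht.ne']), div_eq_iff hL, mul_comm, hFTC]
  simp

theorem logMean_add_logMean_le {a b c d : ℝ} (ha : 0 < a) (hb : 0 < b) (hc : 0 < c)
    (hd : 0 < d) : logMean a b + logMean c d ≤ logMean (a + c) (b + d) := by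
  have hab : IntervalIntegrable _ volume 0 1 :=
    (continuous_rpow_mul_rpow_one_sub ha hb).intervalIntegrable 0 1
  have hcd : IntervalIntegrable _ volume 0 1 :=
    (continuous_rpow_mul_rpow_one_sub hc hd).intervalIntegrable 0 1
  have hacbd : IntervalIntegrable _ volume 0 1 :=
    (continuous_rpow_mul_rpow_one_sub (add_pos ha hc) (add_pos hb hd)).intervalIntegrable 0 1
  rw [logMean_eq_integral ha hb, logMean_eq_integral hc hd,
    logMean_eq_integral (add_pos ha hc) (add_pos hb hd), ← intervalIntegral.integral_add hab hcd]
  exact intervalIntegral.integral_mono_on zero_le_one (hab.add hcd) hacbd fun u hu =>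
    rpow_mul_rpow_add_le ha.le hb.le hc.le hd.le (add_pos ha hc) (add_pos hb hd) hu.1 hu.2

theorem hasDerivAt_logMean_left {s t : ℝ} (hs : 0 < s) (ht : 0 < t) :
    HasDerivAt (fun x => logMean x t) (∫ u in (0 : ℝ)..1, u * (s ^ u * t ^ (1 - u)) / s) s := by
  have hK : Icc (s / 2) (2 * s) ∈ nhds s := Icc_mem_nhds (by linarith) (by linarith)
  have hrep : (fun x => logMean x t) =ᶠ[nhds s] fun x => ∫ u in (0 : ℝ)..1, x ^ u * t ^ (1 - u) :=
    Filter.eventually_of_mem (Ioi_mem_nhds hs) fun x hx => logMean_eq_integral hx ht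
  refine HasDerivAt.congr_of_eventuallyEq ?_ hrep
  refine hasDerivAt_intervalIntegral_of_continuousOn
    (F' := fun x u => u * (x ^ u * t ^ (1 - u)) / x) hK isCompact_Icc ?_ ?_ ?_
  · intro x hx
    exact (continuous_rpow_mul_rpow_one_sub (by linarith [hx.1]) ht).continuousOn
  · intro p hp
    have hp₁ : p.1 ≠ 0 := by linarith [hp.1.1]
    exact ((continuousAt_snd.mul ((continuousAt_fst.rpow continuousAt_snd (Or.inl hp₁)).mul
      (continuousAt_const.rpow (continuousAt_const.sub continuousAt_snd) (Or.inl ht.ne')))).div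
      continuousAt_fst hp₁).continuousWithinAt
  · intro x hx u _
    have hx₀ : x ≠ 0 := by linarith [hx.1]
    exact ((hasDerivAt_rpow_const (p := u) (Or.inl hx₀)).mul_const _).congr_deriv
      (by rw [rpow_sub_one hx₀]; ring)

theorem hasDerivAt_logMean_right {s t : ℝ} (hs : 0 < s) (ht : 0 < t) :
    HasDerivAt (fun y => logMean s y)
      (∫ u in (0 : ℝ)..1, (1 - u) * (s ^ u * t ^ (1 - u)) / t) t := by
  have hK : Icc (t / 2) (2 * t) ∈ nhds t := Icc_mem_nhds (by linarith) (by linarith)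
  have hrep : (fun y => logMean s y) =ᶠ[nhds t] fun y => ∫ u in (0 : ℝ)..1, s ^ u * y ^ (1 - u) :=
    Filter.eventually_of_mem (Ioi_mem_nhds ht) fun y hy => logMean_eq_integral hs hy
  refine HasDerivAt.congr_of_eventuallyEq ?_ hrep
  refine hasDerivAt_intervalIntegral_of_continuousOn
    (F' := fun y u => (1 - u) * (s ^ u * y ^ (1 - u)) / y) hK isCompact_Icc ?_ ?_ ?_
  · intro y hy
    exact (continuous_rpow_mul_rpow_one_sub hs (by linarith [hy.1])).continuousOn
  · intro p hp
    have hp₁ : p.1 ≠ 0 := by linarith [hp.1.1]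
    exact (((continuousAt_const.sub continuousAt_snd).mul
      ((continuousAt_const.rpow continuousAt_snd (Or.inl hs.ne')).mul
      (continuousAt_fst.rpow (continuousAt_const.sub continuousAt_snd) (Or.inl hp₁)))).div
      continuousAt_fst hp₁).continuousWithinAt
  · intro y hy u _
    have hy₀ : y ≠ 0 := by linarith [hy.1]
    exact ((hasDerivAt_rpow_const (p := 1 - u) (Or.inl hy₀)).const_mul (s ^ u)).congr_deriv
      (by rw [rpow_sub_one hy₀]; ring)

theorem logMean_le_tangent {s t s' t' : ℝ} (hs : 0 < s) (ht : 0 < t) (hs' : 0 < s')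
    (ht' : 0 < t') :
    logMean s' t' ≤ logMean s t + (s' - s) * logMean₁ s t + (t' - t) * logMean₂ s t := by
  have hf := continuous_rpow_mul_rpow_one_sub hs ht
  have i₀ : IntervalIntegrable _ volume 0 1 := hf.intervalIntegrable 0 1
  have i₁ : IntervalIntegrable (fun u => u * (s ^ u * t ^ (1 - u)) / s) volume 0 1 :=
    (by fun_prop : Continuous _).intervalIntegrable 0 1
  have i₂ : IntervalIntegrable (fun u => (1 - u) * (s ^ u * t ^ (1 - u)) / t) volume 0 1 :=
    (by fun_prop : Continuous _).intervalIntegrable 0 1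
  rw [logMean₁, logMean₂, (hasDerivAt_logMean_left hs ht).deriv,
    (hasDerivAt_logMean_right hs ht).deriv, logMean_eq_integral hs ht, logMean_eq_integral hs' ht',
    ← intervalIntegral.integral_const_mul, ← intervalIntegral.integral_const_mul,
    ← intervalIntegral.integral_add i₀ (i₁.const_mul _),
    ← intervalIntegral.integral_add (i₀.add (i₁.const_mul _)) (i₂.const_mul _)]
  refine intervalIntegral.integral_mono_on zero_le_one
    ((continuous_rpow_mul_rpow_one_sub hs' ht').intervalIntegrable 0 1)
    ((i₀.add (i₁.const_mul _)).add (i₂.const_mul _)) fun u hu => ?_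
  calc s' ^ u * t' ^ (1 - u) ≤ s ^ u * t ^ (1 - u) * (u * (s' / s) + (1 - u) * (t' / t)) :=
        rpow_mul_rpow_le_tangent hs ht hs'.le ht'.le hu.1 hu.2
    _ = _ := by
        field_simp
        ring

theorem logMean_deriv_sum_bound (s t : ℝ) (hs : 0 < s) (ht : 0 < t) :
    logMean₁ s t + logMean₂ s t ≥ logMean 1 s + logMean 1 t - logMean s t := by
  have hsuper : logMean 1 s + logMean 1 t ≤ logMean (s + 1) (t + 1) := by
    simpa only [logMean_comm 1 s, add_comm 1 t] using logMean_add_logMean_le hs one_pos one_pos ht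
  have htangent := logMean_le_tangent hs ht (by linarith : 0 < s + 1) (by linarith : 0 < t + 1)
  rw [add_sub_cancel_left, add_sub_cancel_left, one_mul, one_mul] at htangent
  linarith
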